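/- Let Γ be a real symmetric positive definite 4×4 covariance matrix of a two-mode state with two smallest eigenvalues λ_1 ≤ λ_2 satisfying λ_1 λ_2 < 1. Then the maximal logarithmic negativity attainable by passive transformations equals −log_2(λ_1 λ_2)/2; i.e., the smallest symplectic eigenvalue of the partially transposed covariance matrix, minimized over passive transformations K applied as Γ ↦ K^T Γ K, equals √(λ_1 λ_2). -/

import Mathlib

open Matrix

open scoped ComplexOrder in
/-- The positive semidefinite square root of a positive semidefinite matrix, as defined in
Mathlib (December 2024); removed from Mathlib since. -/
noncomputable def Matrix.PosSemidef.sqrt {n 𝕜 : Type*} [Fintype n] [RCLike 𝕜] [DecidableEq n]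
    {A : Matrix n n 𝕜} (hA : A.PosSemidef) : Matrix n n 𝕜 :=
  hA.1.eigenvectorUnitary.1 * diagonal ((↑) ∘ Real.sqrt ∘ hA.1.eigenvalues) *
  (star hA.1.eigenvectorUnitary : Matrix n n 𝕜)


/-! Write `p = √Γ ξ` for a unit vector `ξ` and `w = S p`, where `S = K σ̃ Kᵀ` is the partially
transposed symplectic form moved by the passive `K`: a skew-symmetric orthogonal matrix. The
quantity to minimise is `wᵀ Γ w`, and `w ⟂ p`, `|w| = |p|`, `pᵀ Γ⁻¹ p = 1`. Splitting `p` and `w`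
along the lowest eigenvector `v₁`, the last condition gives `λ₁ λ₂ ≤ λ₂ a² + λ₁ (|p|² - a²)` with
`a = p ⬝ v₁`, while `wᵀ Γ w ≥ λ₁ b² + λ₂ (|p|² - b²)` with `b = w ⬝ v₁`; since `p`, `w` are
orthogonal of equal length, `a² + b² ≤ |p|²`, and the three combine to `wᵀ Γ w ≥ λ₁ λ₂`.
The bound is attained at `ξ = v₁` as soon as `S v₁ = ±v₂`, and a passive `K` achieving this is
written down explicitly. -/

section General

variable {n : Type*} [Fintype n]

theorem Matrix.IsSymm.dotProduct_mulVec_comm {A : Matrix n n ℝ} (hA : A.IsSymm) (x y : n → ℝ) :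
    x ⬝ᵥ A *ᵥ y = y ⬝ᵥ A *ᵥ x := by
  simpa [hA.eq] using dotProduct_transpose_mulVec A x y

theorem Matrix.mulVec_dotProduct_eq (A : Matrix n n ℝ) (x y : n → ℝ) :
    (A *ᵥ x) ⬝ᵥ y = x ⬝ᵥ Aᵀ *ᵥ y := by
  rw [dotProduct_transpose_mulVec, dotProduct_comm]

theorem Matrix.dotProduct_mul_mul_mulVec_of_isSymm {R : Matrix n n ℝ} (hR : R.IsSymm)
    (S Γ : Matrix n n ℝ) (x : n → ℝ) :
    x ⬝ᵥ (R * (Sᵀ * Γ * S) * R) *ᵥ x = (S *ᵥ R *ᵥ x) ⬝ᵥ Γ *ᵥ S *ᵥ R *ᵥ x := by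
  have h : R * (Sᵀ * Γ * S) * R = (S * R)ᵀ * Γ * (S * R) := by
    simp only [transpose_mul, hR.eq, Matrix.mul_assoc]
  rw [h, ← mulVec_mulVec, ← mulVec_mulVec, ← mulVec_dotProduct_eq, ← mulVec_mulVec]

theorem dotProduct_self_nonneg (x : n → ℝ) : 0 ≤ x ⬝ᵥ x :=
  Finset.sum_nonneg fun i _ => mul_self_nonneg (x i)

theorem sq_dotProduct_le (x y : n → ℝ) : (x ⬝ᵥ y) ^ 2 ≤ (x ⬝ᵥ x) * (y ⬝ᵥ y) := by
  simpa [dotProduct, sq] using Finset.sum_mul_sq_le_sq_mul_sq Finset.univ x y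

theorem sq_dotProduct_add_sq_dotProduct_le {p w v : n → ℝ} (hv : v ⬝ᵥ v = 1)
    (hpw : p ⬝ᵥ w = 0) (hwp : w ⬝ᵥ w = p ⬝ᵥ p) :
    (p ⬝ᵥ v) ^ 2 + (w ⬝ᵥ v) ^ 2 ≤ p ⬝ᵥ p := by
  set N := p ⬝ᵥ p
  -- `N v - (p ⬝ v) p - (w ⬝ v) w` is `N` times the part of `v` orthogonal to `p` and `w`.
  have hz : (N • v - (p ⬝ᵥ v) • p - (w ⬝ᵥ v) • w) ⬝ᵥ (N • v - (p ⬝ᵥ v) • p - (w ⬝ᵥ v) • w) =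
      N * (N - (p ⬝ᵥ v) ^ 2 - (w ⬝ᵥ v) ^ 2) := by
    simp only [sub_dotProduct, dotProduct_sub, smul_dotProduct, dotProduct_smul, smul_eq_mul, hv]
    rw [dotProduct_comm v p, dotProduct_comm v w, dotProduct_comm w p, hwp, hpw]
    ring
  have hnonneg := hz ▸ dotProduct_self_nonneg (N • v - (p ⬝ᵥ v) • p - (w ⬝ᵥ v) • w)
  rcases (dotProduct_self_nonneg p).eq_or_lt with hN | hN
  · have hp : p = 0 := dotProduct_self_eq_zero.mp hN.symm
    have hw : w = 0 := dotProduct_self_eq_zero.mp (hwp.trans hN.symm)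
    simp [N, hp, hw]
  · nlinarith

theorem mul_dotProduct_self_le_of_forall_unit {Γ : Matrix n n ℝ} {v : n → ℝ} {lam : ℝ}
    (h : ∀ x : n → ℝ, x ⬝ᵥ x = 1 → x ⬝ᵥ v = 0 → lam ≤ x ⬝ᵥ Γ *ᵥ x) {x : n → ℝ}
    (hx : x ⬝ᵥ v = 0) : lam * (x ⬝ᵥ x) ≤ x ⬝ᵥ Γ *ᵥ x := by
  rcases (dotProduct_self_nonneg x).eq_or_lt with h0 | hpos
  · simp [dotProduct_self_eq_zero.mp h0.symm]
  set c := (√(x ⬝ᵥ x))⁻¹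
  have hc : c * c * (x ⬝ᵥ x) = 1 := by
    rw [← mul_inv, Real.mul_self_sqrt hpos.le, inv_mul_cancel₀ hpos.ne']
  have := h (c • x) (by simpa [mul_assoc] using hc) (by simp [hx])
  simp only [smul_dotProduct, mulVec_smul, dotProduct_smul, smul_eq_mul] at this
  calc lam * (x ⬝ᵥ x) ≤ c * (c * x ⬝ᵥ Γ *ᵥ x) * (x ⬝ᵥ x) :=
        mul_le_mul_of_nonneg_right this hpos.le
    _ = x ⬝ᵥ Γ *ᵥ x := by linear_combination (x ⬝ᵥ Γ *ᵥ x) * hc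

section SquareRoot

variable [DecidableEq n] {A : Matrix n n ℝ}

theorem Matrix.PosSemidef.posSemidef_sqrt (hA : A.PosSemidef) : hA.sqrt.PosSemidef := by
  have hd : (diagonal (RCLike.ofReal ∘ Real.sqrt ∘ hA.1.eigenvalues) : Matrix n n ℝ).PosSemidef :=
    PosSemidef.diagonal fun i => Real.sqrt_nonneg _
  have := hd.mul_mul_conjTranspose_same (hA.1.eigenvectorUnitary : Matrix n n ℝ)
  rwa [← star_eq_conjTranspose] at this

theorem Matrix.PosSemidef.sqrt_mul_self (hA : A.PosSemidef) : hA.sqrt * hA.sqrt = A := by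
  have hU : (star hA.1.eigenvectorUnitary : Matrix n n ℝ) * hA.1.eigenvectorUnitary.1 = 1 :=
    Unitary.coe_star_mul_self _
  have hD : (diagonal (RCLike.ofReal ∘ Real.sqrt ∘ hA.1.eigenvalues) : Matrix n n ℝ) *
      diagonal (RCLike.ofReal ∘ Real.sqrt ∘ hA.1.eigenvalues) =
        diagonal (RCLike.ofReal ∘ hA.1.eigenvalues) := by
    rw [diagonal_mul_diagonal]
    congr 1
    funext i
    simp [Real.mul_self_sqrt (hA.eigenvalues_nonneg i)]
  conv_rhs => rw [hA.1.spectral_theorem]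
  simp only [Matrix.PosSemidef.sqrt, Matrix.mul_assoc]
  rw [← Matrix.mul_assoc _ _ (diagonal _ * _), hU, Matrix.one_mul,
    ← Matrix.mul_assoc (diagonal _), hD]
  simp [Unitary.conjStarAlgAut_apply, Matrix.mul_assoc]

end SquareRoot

theorem Matrix.PosSemidef.mulVec_eq_sqrt_smul {R Γ : Matrix n n ℝ} (hR : R.PosSemidef)
    (hRR : R * R = Γ) {lam : ℝ} (hlam : 0 < lam) {v : n → ℝ} (hv : Γ *ᵥ v = lam • v) :
    R *ᵥ v = √lam • v := by
  set y := R *ᵥ v - √lam • v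
  have hRy : R *ᵥ y = -(√lam • y) := by
    simp only [y, mulVec_sub, mulVec_smul, mulVec_mulVec, hRR, hv, smul_sub, smul_smul,
      Real.mul_self_sqrt hlam.le]
    abel
  have hy := hR.dotProduct_mulVec_nonneg y
  simp only [star_trivial, hRy, dotProduct_neg, dotProduct_smul, smul_eq_mul] at hy
  have : y ⬝ᵥ y = 0 := by
    nlinarith [dotProduct_self_nonneg y, Real.sqrt_pos.mpr hlam]
  exact sub_eq_zero.mp (dotProduct_self_eq_zero.mp this)

structure IsOrthogonalComplexStructure [DecidableEq n] (S : Matrix n n ℝ) : Prop where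
  transpose_eq_neg : Sᵀ = -S
  transpose_mul_self : Sᵀ * S = 1

namespace IsOrthogonalComplexStructure

variable [DecidableEq n] {S : Matrix n n ℝ}

theorem conj (hS : IsOrthogonalComplexStructure S) {K : Matrix n n ℝ} (hK : Kᵀ * K = 1) :
    IsOrthogonalComplexStructure (K * S * Kᵀ) where
  transpose_eq_neg := by simp [Matrix.mul_assoc, hS.transpose_eq_neg]
  transpose_mul_self := by
    simp only [transpose_mul, transpose_transpose, Matrix.mul_assoc]
    rw [← Matrix.mul_assoc Kᵀ K, hK, Matrix.one_mul, ← Matrix.mul_assoc Sᵀ, hS.transpose_mul_self,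
      Matrix.one_mul, mul_eq_one_comm.mp hK]

theorem dotProduct_mulVec_self (hS : IsOrthogonalComplexStructure S) (x : n → ℝ) :
    x ⬝ᵥ S *ᵥ x = 0 := by
  have := dotProduct_transpose_mulVec S x x
  rw [hS.transpose_eq_neg, neg_mulVec, dotProduct_neg] at this
  linarith

theorem mulVec_dotProduct_mulVec (hS : IsOrthogonalComplexStructure S) (x y : n → ℝ) :
    (S *ᵥ x) ⬝ᵥ S *ᵥ y = x ⬝ᵥ y := by
  rw [mulVec_dotProduct_eq, mulVec_mulVec, hS.transpose_mul_self, one_mulVec]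

theorem mulVec_mulVec_self (hS : IsOrthogonalComplexStructure S) (x : n → ℝ) :
    S *ᵥ S *ᵥ x = -x := by
  have h := hS.transpose_mul_self
  rw [hS.transpose_eq_neg, Matrix.neg_mul, neg_eq_iff_eq_neg] at h
  rw [mulVec_mulVec, h, neg_mulVec, one_mulVec]

end IsOrthogonalComplexStructure

structure LowestEigenvalues (Γ : Matrix n n ℝ) (v : n → ℝ) (lam1 lam2 : ℝ) : Prop where
  dotProduct_self : v ⬝ᵥ v = 1
  mulVec_eq : Γ *ᵥ v = lam1 • v
  le_of_orthogonal : ∀ x : n → ℝ, x ⬝ᵥ v = 0 → lam2 * (x ⬝ᵥ x) ≤ x ⬝ᵥ Γ *ᵥ x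

namespace LowestEigenvalues

variable {Γ : Matrix n n ℝ} {v : n → ℝ} {lam1 lam2 : ℝ}

theorem dotProduct_mulVec_eigenvector (h : LowestEigenvalues Γ v lam1 lam2) (hΓ : Γ.IsSymm)
    (x : n → ℝ) : v ⬝ᵥ Γ *ᵥ x = lam1 * (x ⬝ᵥ v) := by
  rw [hΓ.dotProduct_mulVec_comm, h.mulVec_eq, dotProduct_smul, smul_eq_mul]

theorem orthogonal_sub_proj (h : LowestEigenvalues Γ v lam1 lam2) (x : n → ℝ) :
    (x - (x ⬝ᵥ v) • v) ⬝ᵥ v = 0 := by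
  rw [sub_dotProduct, smul_dotProduct, h.dotProduct_self, smul_eq_mul, mul_one, sub_self]

theorem le_dotProduct_mulVec (h : LowestEigenvalues Γ v lam1 lam2) (hΓ : Γ.IsSymm)
    (w : n → ℝ) :
    lam1 * (w ⬝ᵥ v) ^ 2 + lam2 * (w ⬝ᵥ w - (w ⬝ᵥ v) ^ 2) ≤ w ⬝ᵥ Γ *ᵥ w := by
  have hperp := h.le_of_orthogonal _ (h.orthogonal_sub_proj w)
  simp only [sub_dotProduct, dotProduct_sub, mulVec_sub, mulVec_smul, smul_dotProduct,
    dotProduct_smul, smul_eq_mul, h.dotProduct_self, h.dotProduct_mulVec_eigenvector hΓ,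
    h.mulVec_eq, dotProduct_comm v w] at hperp
  linarith

theorem mul_dotProduct_mulVec_le (h : LowestEigenvalues Γ v lam1 lam2) (hlam2 : 0 ≤ lam2)
    {z : n → ℝ} (hz : z ⬝ᵥ v = 0) : lam2 * (z ⬝ᵥ Γ *ᵥ z) ≤ (Γ *ᵥ z) ⬝ᵥ (Γ *ᵥ z) := by
  set t := z ⬝ᵥ Γ *ᵥ z
  have hzt : lam2 * (z ⬝ᵥ z) ≤ t := h.le_of_orthogonal z hz
  rcases (mul_nonneg hlam2 (dotProduct_self_nonneg z)).trans hzt |>.eq_or_lt with ht | ht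
  · rw [← ht, mul_zero]
    exact dotProduct_self_nonneg _
  refine le_of_mul_le_mul_right ?_ ht
  calc lam2 * t * t = lam2 * t ^ 2 := by ring
    _ ≤ lam2 * ((z ⬝ᵥ z) * ((Γ *ᵥ z) ⬝ᵥ (Γ *ᵥ z))) :=
        mul_le_mul_of_nonneg_left (sq_dotProduct_le z (Γ *ᵥ z)) hlam2
    _ = (Γ *ᵥ z) ⬝ᵥ (Γ *ᵥ z) * (lam2 * (z ⬝ᵥ z)) := by ring
    _ ≤ (Γ *ᵥ z) ⬝ᵥ (Γ *ᵥ z) * t := mul_le_mul_of_nonneg_left hzt (dotProduct_self_nonneg _)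

/-- With `p = Γ q` and `a = p ⬝ v`, this is `pᵀ Γ⁻¹ p ≤ a² / λ₁ + (|p|² - a²) / λ₂`. -/
theorem mul_mul_dotProduct_mulVec_le (h : LowestEigenvalues Γ v lam1 lam2) (hΓ : Γ.IsSymm)
    (hlam1 : 0 ≤ lam1) (hlam2 : 0 ≤ lam2) (q : n → ℝ) :
    lam1 * lam2 * (q ⬝ᵥ Γ *ᵥ q) ≤
      lam2 * ((Γ *ᵥ q) ⬝ᵥ v) ^ 2 + lam1 * ((Γ *ᵥ q) ⬝ᵥ (Γ *ᵥ q) - ((Γ *ᵥ q) ⬝ᵥ v) ^ 2) := by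
  set z := q - (q ⬝ᵥ v) • v
  have hz : z ⬝ᵥ v = 0 := h.orthogonal_sub_proj q
  have hq : q = z + (q ⬝ᵥ v) • v := by simp [z]
  have hperp := mul_le_mul_of_nonneg_left (h.mul_dotProduct_mulVec_le hlam2 hz) hlam1
  rw [hq]
  simp only [mulVec_add, mulVec_smul, h.mulVec_eq, add_dotProduct, dotProduct_add,
    smul_dotProduct, dotProduct_smul, smul_eq_mul, h.dotProduct_self, hz,
    h.dotProduct_mulVec_eigenvector hΓ, dotProduct_comm (Γ *ᵥ z) v]
  nlinarith

theorem mul_le_dotProduct_mulVec (h : LowestEigenvalues Γ v lam1 lam2) (hΓ : Γ.IsSymm)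
    (hlam1 : 0 ≤ lam1) (hlam12 : lam1 ≤ lam2) {q w : n → ℝ} (hq : q ⬝ᵥ Γ *ᵥ q = 1)
    (hqw : (Γ *ᵥ q) ⬝ᵥ w = 0) (hw : w ⬝ᵥ w = (Γ *ᵥ q) ⬝ᵥ (Γ *ᵥ q)) :
    lam1 * lam2 ≤ w ⬝ᵥ Γ *ᵥ w := by
  have hp := h.mul_mul_dotProduct_mulVec_le hΓ hlam1 (hlam1.trans hlam12) q
  have hw' := h.le_dotProduct_mulVec hΓ w
  have hpw := sq_dotProduct_add_sq_dotProduct_le h.dotProduct_self hqw hw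
  rw [hq, mul_one] at hp
  rw [hw] at hw'
  nlinarith [mul_nonneg (sub_nonneg.mpr hlam12) (sub_nonneg.mpr hpw)]

theorem mul_le_dotProduct_conj_mulVec [DecidableEq n] (h : LowestEigenvalues Γ v lam1 lam2)
    (hΓ : Γ.IsSymm) (hlam1 : 0 ≤ lam1) (hlam12 : lam1 ≤ lam2) {R S : Matrix n n ℝ}
    (hR : R.IsSymm) (hRu : IsUnit R) (hRR : R * R = Γ) (hS : IsOrthogonalComplexStructure S)
    {ξ : n → ℝ} (hξ : ξ ⬝ᵥ ξ = 1) : lam1 * lam2 ≤ ξ ⬝ᵥ (R * (Sᵀ * Γ * S) * R) *ᵥ ξ := by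
  obtain ⟨q, rfl⟩ : ∃ q, R *ᵥ q = ξ := mulVec_surjective_iff_isUnit.mpr hRu ξ
  have hΓq : Γ *ᵥ q = R *ᵥ R *ᵥ q := by rw [← hRR, mulVec_mulVec]
  rw [dotProduct_mul_mul_mulVec_of_isSymm hR, ← hΓq]
  refine h.mul_le_dotProduct_mulVec (q := q) hΓ hlam1 hlam12 ?_ ?_ ?_
  · rw [hΓq, ← hξ, mulVec_dotProduct_eq, hR.eq]
  · exact hS.dotProduct_mulVec_self _
  · exact hS.mulVec_dotProduct_mulVec _ _

end LowestEigenvalues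

end General

theorem csInf_sqrt_csInf_eq {ι α : Type*} {P₁ P₂ : ι → Prop} {Q : α → Prop} {f : ι → α → ℝ}
    {m : ℝ} (hle : ∀ i, P₁ i → P₂ i → ∀ x, Q x → m ≤ f i x) {i₀ : ι} (hi₀ : P₁ i₀ ∧ P₂ i₀)
    {x₀ : α} (hx₀ : Q x₀) (hf : f i₀ x₀ = m) :
    sInf {r | ∃ i, P₁ i ∧ P₂ i ∧ r = √(sInf {q | ∃ x, Q x ∧ q = f i x})} = √m := by
  have hinner : ∀ i, P₁ i → P₂ i → m ≤ sInf {q | ∃ x, Q x ∧ q = f i x} := fun i h₁ h₂ =>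
    le_csInf ⟨_, x₀, hx₀, rfl⟩ (by rintro _ ⟨x, hx, rfl⟩; exact hle i h₁ h₂ x hx)
  have hinner₀ : sInf {q | ∃ x, Q x ∧ q = f i₀ x} = m :=
    le_antisymm (csInf_le ⟨m, by rintro _ ⟨x, hx, rfl⟩; exact hle i₀ hi₀.1 hi₀.2 x hx⟩
      ⟨x₀, hx₀, hf.symm⟩) (hinner i₀ hi₀.1 hi₀.2)
  refine IsLeast.csInf_eq ⟨⟨i₀, hi₀.1, hi₀.2, by rw [hinner₀]⟩, ?_⟩
  rintro _ ⟨i, h₁, h₂, rfl⟩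
  exact Real.sqrt_le_sqrt (hinner i h₁ h₂)

def sympForm : Matrix (Fin 2 ⊕ Fin 2) (Fin 2 ⊕ Fin 2) ℝ := fromBlocks 0 1 (-1) 0

def momentumFlip : Matrix (Fin 2 ⊕ Fin 2) (Fin 2 ⊕ Fin 2) ℝ :=
  fromBlocks 1 0 0 (diagonal ![1, -1])

theorem sympForm_isOrthogonalComplexStructure : IsOrthogonalComplexStructure sympForm where
  transpose_eq_neg := by simp [sympForm, fromBlocks_transpose, fromBlocks_neg]
  transpose_mul_self := by
    simp [sympForm, fromBlocks_transpose, fromBlocks_multiply, ← fromBlocks_one]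

theorem momentumFlip_transpose : momentumFlipᵀ = momentumFlip := by
  simp [momentumFlip, fromBlocks_transpose]

theorem momentumFlip_transpose_mul_self : momentumFlipᵀ * momentumFlip = 1 := by
  rw [momentumFlip_transpose]
  simp only [momentumFlip, fromBlocks_multiply, ← fromBlocks_one, diagonal_mul_diagonal]
  ext i j
  fin_cases i <;> fin_cases j <;> simp

theorem ptSympForm_isOrthogonalComplexStructure :
    IsOrthogonalComplexStructure (momentumFlip * sympForm * momentumFlip) := by
  simpa only [momentumFlip_transpose] using
    sympForm_isOrthogonalComplexStructure.conj momentumFlip_transpose_mul_self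

/-- The columns are `u, Q u, -σ u, -σ Q u`, where `σ = sympForm` and `Q = diag(F, -F)` with
`F = !![0, 1; -1, 0]` is a complex structure anticommuting with `σ`. For a unit vector `u` this is
a passive transformation, and conjugating the partially transposed form by it gives `σ` times the
reflection in the complex line `span {u, σ u}`. -/
def passiveOfVec (u : Fin 2 ⊕ Fin 2 → ℝ) : Matrix (Fin 2 ⊕ Fin 2) (Fin 2 ⊕ Fin 2) ℝ :=
  let A : Matrix (Fin 2) (Fin 2) ℝ := !![u (.inl 0), u (.inl 1); u (.inl 1), -u (.inl 0)]
  let B : Matrix (Fin 2) (Fin 2) ℝ := !![-u (.inr 0), u (.inr 1); -u (.inr 1), -u (.inr 0)]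
  fromBlocks A B (-B) A

theorem passiveOfVec_transpose_mul_self (u : Fin 2 ⊕ Fin 2 → ℝ) :
    (passiveOfVec u)ᵀ * passiveOfVec u = (u ⬝ᵥ u) • 1 := by
  ext (i | i) (j | j) <;> fin_cases i <;> fin_cases j <;>
    simp [passiveOfVec, Matrix.mul_apply, dotProduct, Fintype.sum_sum_type, Fin.sum_univ_two] <;>
    ring

theorem passiveOfVec_transpose_mul_sympForm_mul (u : Fin 2 ⊕ Fin 2 → ℝ) :
    (passiveOfVec u)ᵀ * sympForm * passiveOfVec u = (u ⬝ᵥ u) • sympForm := by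
  ext (i | i) (j | j) <;> fin_cases i <;> fin_cases j <;>
    simp [passiveOfVec, sympForm, Matrix.mul_apply, dotProduct, Fintype.sum_sum_type,
      Fin.sum_univ_two] <;>
    ring

theorem passiveOfVec_conj_mulVec (u x : Fin 2 ⊕ Fin 2 → ℝ) :
    (passiveOfVec u * (momentumFlip * sympForm * momentumFlip) * (passiveOfVec u)ᵀ) *ᵥ x =
      sympForm *ᵥ ((2 * (u ⬝ᵥ x)) • u + (2 * ((sympForm *ᵥ u) ⬝ᵥ x)) • sympForm *ᵥ u
        - (u ⬝ᵥ u) • x) := by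
  ext (i | i) <;> fin_cases i <;>
    simp [passiveOfVec, sympForm, momentumFlip, Matrix.mul_apply, mulVec, dotProduct,
      Fintype.sum_sum_type, Fin.sum_univ_two] <;>
    ring

theorem exists_passive_conj_mulVec_eq {v w : Fin 2 ⊕ Fin 2 → ℝ} (hv : v ⬝ᵥ v = 1)
    (hw : w ⬝ᵥ w = 1) (hvw : 0 ≤ v ⬝ᵥ w) (hσw : (sympForm *ᵥ w) ⬝ᵥ v = 0) :
    ∃ K, Kᵀ * sympForm * K = sympForm ∧ Kᵀ * K = 1 ∧
      (K * (momentumFlip * sympForm * momentumFlip) * Kᵀ) *ᵥ v = sympForm *ᵥ w := by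
  have hσ := sympForm_isOrthogonalComplexStructure
  have hpos : 0 < 2 + 2 * (v ⬝ᵥ w) := by linarith
  set c := (√(2 + 2 * (v ⬝ᵥ w)))⁻¹
  have hc : c * c * (2 + 2 * (v ⬝ᵥ w)) = 1 := by
    rw [← mul_inv, Real.mul_self_sqrt hpos.le, inv_mul_cancel₀ hpos.ne']
  -- The reflection in the complex line through `v + w` sends `v` to `w`, as `σ w ⟂ v`.
  set u := c • (v + w)
  have hu : u ⬝ᵥ u = 1 := by
    simp only [u, smul_dotProduct, dotProduct_smul, add_dotProduct, dotProduct_add, smul_eq_mul,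
      hv, hw, dotProduct_comm w v]
    linear_combination hc
  have hσu : (sympForm *ᵥ u) ⬝ᵥ v = 0 := by
    simp only [u, mulVec_smul, mulVec_add, smul_dotProduct, add_dotProduct, hσw, smul_eq_mul,
      dotProduct_comm (sympForm *ᵥ v) v, hσ.dotProduct_mulVec_self, add_zero, mul_zero]
  have huv : (2 * (u ⬝ᵥ v)) • u = v + w := by
    simp only [u, smul_dotProduct, add_dotProduct, hv, dotProduct_comm w v, smul_smul,
      smul_eq_mul]
    rw [show 2 * (c * (1 + v ⬝ᵥ w)) * c = 1 by linear_combination hc, one_smul]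
  refine ⟨passiveOfVec u, ?_, ?_, ?_⟩
  · rw [passiveOfVec_transpose_mul_sympForm_mul, hu, one_smul]
  · rw [passiveOfVec_transpose_mul_self, hu, one_smul]
  · rw [passiveOfVec_conj_mulVec, hσu, huv, hu]
    simp

theorem exists_passive_conj_mulVec_eq_or_eq_neg {v₁ v₂ : Fin 2 ⊕ Fin 2 → ℝ}
    (hv₁ : v₁ ⬝ᵥ v₁ = 1) (hv₂ : v₂ ⬝ᵥ v₂ = 1) (hv₁₂ : v₁ ⬝ᵥ v₂ = 0) :
    ∃ K, Kᵀ * sympForm * K = sympForm ∧ Kᵀ * K = 1 ∧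
      ((K * (momentumFlip * sympForm * momentumFlip) * Kᵀ) *ᵥ v₁ = v₂ ∨
        (K * (momentumFlip * sympForm * momentumFlip) * Kᵀ) *ᵥ v₁ = -v₂) := by
  have hσ := sympForm_isOrthogonalComplexStructure
  have hw : (sympForm *ᵥ v₂) ⬝ᵥ (sympForm *ᵥ v₂) = 1 := by
    rw [hσ.mulVec_dotProduct_mulVec, hv₂]
  have hv₂₁ : v₂ ⬝ᵥ v₁ = 0 := by rw [dotProduct_comm, hv₁₂]
  rcases le_total 0 (v₁ ⬝ᵥ sympForm *ᵥ v₂) with hc | hc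
  · obtain ⟨K, hKσ, hK, hKv⟩ := exists_passive_conj_mulVec_eq hv₁ hw hc
      (by rw [hσ.mulVec_mulVec_self, neg_dotProduct, hv₂₁, neg_zero])
    exact ⟨K, hKσ, hK, .inr (by rw [hKv, hσ.mulVec_mulVec_self])⟩
  · obtain ⟨K, hKσ, hK, hKv⟩ := exists_passive_conj_mulVec_eq (w := -(sympForm *ᵥ v₂)) hv₁
      (by rw [neg_dotProduct, dotProduct_neg, neg_neg, hw]) (by rwa [dotProduct_neg, neg_nonneg])
      (by rw [mulVec_neg, hσ.mulVec_mulVec_self, neg_neg, hv₂₁])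
    exact ⟨K, hKσ, hK, .inl (by rw [hKv, mulVec_neg, hσ.mulVec_mulVec_self, neg_neg])⟩

theorem two_mode_optimal_log_negativity_general
    (σ : Matrix (Fin 2 ⊕ Fin 2) (Fin 2 ⊕ Fin 2) ℝ)
    (hσ : σ = Matrix.fromBlocks 0 1 (-1) 0)
    (E : Matrix (Fin 2) (Fin 2) ℝ) (hE : E = Matrix.diagonal ![1, -1])
    (σt : Matrix (Fin 2 ⊕ Fin 2) (Fin 2 ⊕ Fin 2) ℝ)
    (hσt : σt = (Matrix.fromBlocks 1 0 0 E) * σ * (Matrix.fromBlocks 1 0 0 E))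
    (Γ : Matrix (Fin 2 ⊕ Fin 2) (Fin 2 ⊕ Fin 2) ℝ)
    (hΓsymm : Γ.IsSymm) (hΓpd : Γ.PosDef)
    (lam1 lam2 : ℝ) (v1 v2 : Fin 2 ⊕ Fin 2 → ℝ)
    (hv1 : v1 ⬝ᵥ v1 = 1) (hv2 : v2 ⬝ᵥ v2 = 1) (hv12 : v1 ⬝ᵥ v2 = 0)
    (hev1 : Γ.mulVec v1 = lam1 • v1) (hev2 : Γ.mulVec v2 = lam2 • v2)
    (hmin1 : ∀ x : Fin 2 ⊕ Fin 2 → ℝ, x ⬝ᵥ x = 1 → lam1 ≤ x ⬝ᵥ Γ.mulVec x)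
    (hmin2 : ∀ x : Fin 2 ⊕ Fin 2 → ℝ, x ⬝ᵥ x = 1 → x ⬝ᵥ v1 = 0 → lam2 ≤ x ⬝ᵥ Γ.mulVec x)
    (T : Set ℝ)
    (hT : T = { r : ℝ | ∃ K : Matrix (Fin 2 ⊕ Fin 2) (Fin 2 ⊕ Fin 2) ℝ,
      Kᵀ * σ * K = σ ∧ Kᵀ * K = 1 ∧
      r = Real.sqrt (sInf { q : ℝ | ∃ ξ : Fin 2 ⊕ Fin 2 → ℝ, ξ ⬝ᵥ ξ = 1 ∧
        q = ξ ⬝ᵥ (hΓpd.posSemidef.sqrt * ((K * σt * Kᵀ)ᵀ * Γ * (K * σt * Kᵀ)) *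
          hΓpd.posSemidef.sqrt).mulVec ξ }) }) :
    sInf T = Real.sqrt (lam1 * lam2) ∧
      -Real.logb 2 ((sInf T) ^ 2) / 2 = -Real.logb 2 (lam1 * lam2) / 2 := by
  obtain rfl : σ = sympForm := hσ
  obtain rfl : σt = momentumFlip * sympForm * momentumFlip := by rw [hσt, hE]; rfl
  set R := hΓpd.posSemidef.sqrt
  have hR : R.PosSemidef := hΓpd.posSemidef.posSemidef_sqrt
  have hRR : R * R = Γ := hΓpd.posSemidef.sqrt_mul_self
  have hRsymm : R.IsSymm := isHermitian_iff_isSymm.mp hR.isHermitian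
  have hRu : IsUnit R := isUnit_of_mul_isUnit_left (hRR ▸ hΓpd.isUnit)
  have hlam1 : 0 < lam1 := by
    simpa [hev1, hv1] using hΓpd.dotProduct_mulVec_pos (x := v1) (by rintro rfl; simp at hv1)
  have hlam12 : lam1 ≤ lam2 := by simpa [hev2, hv2] using hmin1 v2 hv2
  have heig : LowestEigenvalues Γ v1 lam1 lam2 :=
    ⟨hv1, hev1, fun x hx => mul_dotProduct_self_le_of_forall_unit hmin2 hx⟩
  obtain ⟨K, hKσ, hK, hKv⟩ := exists_passive_conj_mulVec_eq_or_eq_neg hv1 hv2 hv12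
  set σt := momentumFlip * sympForm * momentumFlip
  have hattain : v1 ⬝ᵥ (R * ((K * σt * Kᵀ)ᵀ * Γ * (K * σt * Kᵀ)) * R) *ᵥ v1 = lam1 * lam2 := by
    rw [dotProduct_mul_mul_mulVec_of_isSymm hRsymm, hR.mulVec_eq_sqrt_smul hRR hlam1 hev1,
      mulVec_smul]
    have hsq := Real.mul_self_sqrt hlam1.le
    rcases hKv with h | h <;> simp [h, mulVec_neg, mulVec_smul, hev2, hv2] <;>
      linear_combination lam2 * hsq
  have hinf : sInf T = √(lam1 * lam2) := hT ▸ csInf_sqrt_csInf_eq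
    (fun K _ hK ξ hξ => heig.mul_le_dotProduct_conj_mulVec hΓsymm hlam1.le hlam12 hRsymm hRu hRR
      (ptSympForm_isOrthogonalComplexStructure.conj hK) hξ) ⟨hKσ, hK⟩ hv1 hattain
  refine ⟨hinf, ?_⟩
  rw [hinf, Real.sq_sqrt (mul_pos hlam1 (hlam1.trans_le hlam12)).le]

/-- For a two-mode positive definite covariance matrix `Γ` with two
smallest eigenvalues `λ1 ≤ λ2`, `λ1 λ2 < 1`, the smallest symplectic eigenvalue of the
partially transposed covariance matrix, minimized over passive transformations
`Γ ↦ Kᵀ Γ K`, equals `√(λ1 λ2)`; equivalently the maximal attainable logarithmic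
negativity is `−log₂(λ1 λ2)/2`. -/
theorem two_mode_optimal_log_negativity
    (σ : Matrix (Fin 2 ⊕ Fin 2) (Fin 2 ⊕ Fin 2) ℝ)
    (hσ : σ = Matrix.fromBlocks 0 1 (-1) 0)
    (E : Matrix (Fin 2) (Fin 2) ℝ) (hE : E = Matrix.diagonal ![1, -1])
    (σt : Matrix (Fin 2 ⊕ Fin 2) (Fin 2 ⊕ Fin 2) ℝ)
    (hσt : σt = (Matrix.fromBlocks 1 0 0 E) * σ * (Matrix.fromBlocks 1 0 0 E))
    (Γ : Matrix (Fin 2 ⊕ Fin 2) (Fin 2 ⊕ Fin 2) ℝ)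
    (hΓsymm : Γ.IsSymm) (hΓpd : Γ.PosDef)
    (lam1 lam2 : ℝ) (v1 v2 : Fin 2 ⊕ Fin 2 → ℝ)
    (hv1 : v1 ⬝ᵥ v1 = 1) (hv2 : v2 ⬝ᵥ v2 = 1) (hv12 : v1 ⬝ᵥ v2 = 0)
    (hev1 : Γ.mulVec v1 = lam1 • v1) (hev2 : Γ.mulVec v2 = lam2 • v2)
    (hmin1 : ∀ x : Fin 2 ⊕ Fin 2 → ℝ, x ⬝ᵥ x = 1 → lam1 ≤ x ⬝ᵥ Γ.mulVec x)
    (hmin2 : ∀ x : Fin 2 ⊕ Fin 2 → ℝ, x ⬝ᵥ x = 1 → x ⬝ᵥ v1 = 0 → lam2 ≤ x ⬝ᵥ Γ.mulVec x)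
    (hprod : lam1 * lam2 < 1)
    (T : Set ℝ)
    (hT : T = { r : ℝ | ∃ K : Matrix (Fin 2 ⊕ Fin 2) (Fin 2 ⊕ Fin 2) ℝ,
      Kᵀ * σ * K = σ ∧ Kᵀ * K = 1 ∧
      r = Real.sqrt (sInf { q : ℝ | ∃ ξ : Fin 2 ⊕ Fin 2 → ℝ, ξ ⬝ᵥ ξ = 1 ∧
        q = ξ ⬝ᵥ (hΓpd.posSemidef.sqrt * ((K * σt * Kᵀ)ᵀ * Γ * (K * σt * Kᵀ)) *
          hΓpd.posSemidef.sqrt).mulVec ξ }) }) :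
    sInf T = Real.sqrt (lam1 * lam2) ∧
      -Real.logb 2 ((sInf T) ^ 2) / 2 = -Real.logb 2 (lam1 * lam2) / 2 :=
  two_mode_optimal_log_negativity_general σ hσ E hE σt hσt Γ hΓsymm hΓpd lam1 lam2 v1 v2 hv1 hv2
    hv12 hev1 hev2 hmin1 hmin2 T hT
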